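/- Let n ≥ 1 be an integer, N ≥ 1, ξ_1, …, ξ_N ∈ ℤⁿ nonzero vectors, m_1, …, m_N positive integers, λ ≥ 2 an integer with N ≤ λⁿ, and ν_1, …, ν_{λⁿ} an enumeration of a complete set of representatives of ℤⁿ/λℤⁿ. Let p_1, …, p_N be trigonometric polynomials on ℝⁿ with p_l(0) = 1 and |p_l(ω)|² = 1 − sin^{2 m_l}(ξ_l·ω/2) for all ω ∈ ℝⁿ, and define τ(ω) = λ^{−n/2}( Σ_{l=1}^{N} p_l(λω) e^{i ν_l·ω} + Σ_{l=N+1}^{λⁿ} e^{i ν_l·ω} ), q_{D,l}(ω) = λ^{−n/2} 2^{−m_l} (1 − e^{−i λ ξ_l·ω})^{m_l} τ(ω), q_{C,μ}(ω) = e^{i ν_μ·ω} − λ^{−n/2} τ(ω)·conj(p_μ(λω)) for 1 ≤ μ ≤ N and q_{C,μ}(ω) = e^{i ν_μ·ω} − λ^{−n/2} τ(ω) for N+1 ≤ μ ≤ λⁿ. Then: (i) for each 1 ≤ l ≤ N, the directional wavelet mask q_{D,l} has a zero of order exactly m_l at 0; and (ii) if a ≥ 1 and b ≥ 1 are integers such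 that τ has a zero of order at least a at every γ ∈ Γ∖{0} and τ − λ^{n/2} has a zero of order at least b at 0, then each complementary wavelet mask q_{C,μ}, 1 ≤ μ ≤ λⁿ, has a zero of order at least min{a, b} ≥ 1 at 0. -/

import Mathlib

open Complex Real Function ComplexConjugate BigOperators

noncomputable section

section Infra



variable {E : Type*} [NormedAddCommGroup E] [NormedSpace ℝ E]

/-- order-of-zero predicate -/
def OG (f : E → ℂ) (m : ℕ) (x : E) : Prop := ∀ j, j < m → iteratedFDeriv ℝ j f x = 0

abbrev Sm (f : E → ℂ) : Prop := ContDiff ℝ ((⊤:ℕ∞) : WithTop ℕ∞) f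

lemma Sm.ofNat {f : E → ℂ} (hf : Sm f) (j : ℕ) : ContDiff ℝ (j : WithTop ℕ∞) f :=
  hf.of_le (by exact_mod_cast le_top)

lemma natle (j : ℕ) : (j : WithTop ℕ∞) ≤ ((⊤:ℕ∞) : WithTop ℕ∞) := by exact_mod_cast le_top

lemma OG.mono {f : E → ℂ} {m m' : ℕ} {x : E} (h : OG f m x) (hle : m' ≤ m) : OG f m' x :=
  fun j hj => h j (lt_of_lt_of_le hj hle)

lemma OG.zero_le (f : E → ℂ) (x : E) : OG f 0 x := fun j hj => absurd hj (Nat.not_lt_zero j)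

lemma og_value {f : E → ℂ} {m : ℕ} {x : E} (h : OG f m x) (hm : 0 < m) : f x = 0 := by
  have h0 := h 0 hm
  have := congrArg (fun (Φ : ContinuousMultilinearMap ℝ (fun _ : Fin 0 => E) ℂ) => Φ (fun _ => 0)) h0
  simpa [iteratedFDeriv_zero_apply] using this

lemma OG.add {f g : E → ℂ} {m : ℕ} {x : E} (hf : OG f m x) (hg : OG g m x)
    (hf' : Sm f) (hg' : Sm g) : OG (fun y => f y + g y) m x := by
  intro j hj
  have : iteratedFDeriv ℝ j (f + g) x = iteratedFDeriv ℝ j f x + iteratedFDeriv ℝ j g x :=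
    iteratedFDeriv_add_apply (hf'.ofNat j).contDiffAt (hg'.ofNat j).contDiffAt
  have h2 : (fun y => f y + g y) = f + g := rfl
  rw [h2, this, hf j hj, hg j hj, add_zero]

lemma OG.mul {f g : E → ℂ} {a b : ℕ} {x : E} (hf : OG f a x) (hg : OG g b x)
    (hf' : Sm f) (hg' : Sm g) : OG (fun y => f y * g y) (a + b) x := by
  intro j hj
  rw [← norm_eq_zero]
  have hb := norm_iteratedFDeriv_mul_le (𝕜 := ℝ) hf' hg' x (natle j)
  have hz : ∀ i ∈ Finset.range (j+1),
      (j.choose i : ℝ) * ‖iteratedFDeriv ℝ i f x‖ * ‖iteratedFDeriv ℝ (j - i) g x‖ = 0 := by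
    intro i hi
    rcases lt_or_ge i a with h | h
    · rw [hf i h]; simp
    · have : j - i < b := by
        simp only [Finset.mem_range] at hi; omega
      rw [hg _ this]; simp
  rw [Finset.sum_eq_zero hz] at hb
  exact le_antisymm hb (norm_nonneg _)

lemma OG.pow {f : E → ℂ} {x : E} (hf : OG f 1 x) (hf' : Sm f) (m : ℕ) :
    OG (fun y => f y ^ m) m x := by
  induction m with
  | zero => exact OG.zero_le _ _
  | succ k ih =>
      have := ih.mul hf (by exact ContDiff.pow hf' k) hf'
      simpa [pow_succ] using this

lemma OG.comp_clm {F : Type*} [NormedAddCommGroup F] [NormedSpace ℝ F]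
    {f : E → ℂ} {a : ℕ} (A : F →L[ℝ] E) {y : F} (hf : OG f a (A y)) (hf' : Sm f) :
    OG (fun t => f (A t)) a y := by
  intro j hj
  have := A.iteratedFDeriv_comp_right (f := f) (hf'.ofNat j) y (le_refl (j : WithTop ℕ∞))
  have h2 : (fun t => f (A t)) = f ∘ A := rfl
  rw [h2, this, hf j hj]
  ext v
  simp

lemma OG.smulC {f : E → ℂ} {a : ℕ} {x : E} (c : ℂ) (hf : OG f a x) (hf' : Sm f) :
    OG (fun y => c * f y) a x := by
  have := (OG.mul (f := fun _ => c) (g := f) (a := 0) (b := a)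
    (OG.zero_le _ _) hf contDiff_const hf')
  simpa using this

lemma OG.conjC {f : E → ℂ} {a : ℕ} {x : E} (hf : OG f a x) (hf' : Sm f) :
    OG (fun y => conj (f y)) a x := by
  intro j hj
  have hcomp := (Complex.conjCLE.toContinuousLinearMap).iteratedFDeriv_comp_left
    (f := f) (x := x) (hf'.ofNat j).contDiffAt (le_refl (j : WithTop ℕ∞))
  have h2 : (fun y => conj (f y)) = (Complex.conjCLE.toContinuousLinearMap) ∘ f := rfl
  rw [h2, hcomp, hf j hj]
  ext v
  simp

lemma Sm.conj {f : E → ℂ} (hf : Sm f) : Sm (fun y => conj (f y)) := by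
  have : (fun y => conj (f y)) = (Complex.conjCLE.toContinuousLinearMap) ∘ f := rfl
  rw [this]
  exact (Complex.conjCLE.toContinuousLinearMap.contDiff).comp hf

lemma OG.zero_fun {a : ℕ} {x : E} : OG (fun _ : E => (0:ℂ)) a x := by
  intro j hj
  simpa using iteratedFDeriv_zero_fun (𝕜 := ℝ) (n := j) (E := E) (F := ℂ) ▸ rfl

lemma OG.sum {ι : Type*} {s : Finset ι} {f : ι → E → ℂ} {a : ℕ} {x : E}
    (h : ∀ i ∈ s, OG (f i) a x) (h' : ∀ i ∈ s, Sm (f i)) :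
    OG (fun y => ∑ i ∈ s, f i y) a x := by
  classical
  induction s using Finset.induction with
  | empty => simpa using OG.zero_fun
  | @insert c s hni ih =>
      have h1 : OG (fun y => f c y + ∑ i ∈ s, f i y) a x := by
        refine OG.add (h c (by simp)) (ih (fun i hi => h i (by simp [hi]))
          (fun i hi => h' i (by simp [hi]))) (h' c (by simp)) ?_
        exact ContDiff.sum (fun i hi => h' i (by simp [hi]))
      intro j hj
      have := h1 j hj
      simpa [Finset.sum_insert hni] using this

variable {F : Type*} [NormedAddCommGroup F] [NormedSpace ℝ F]

lemma diffAt_comp_add_iff {g : E → F} {x γ : E} :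
    DifferentiableAt ℝ (fun y => g (y + γ)) x ↔ DifferentiableAt ℝ g (x + γ) := by
  constructor
  · intro h
    have hg : g = fun z => (fun y => g (y + γ)) (z - γ) := by funext z; simp
    have h' : DifferentiableAt ℝ (fun y => g (y + γ)) ((x + γ) - γ) := by
      simpa [add_sub_cancel_right] using h
    rw [hg]
    exact DifferentiableAt.comp (g := fun y => g (y + γ)) (x + γ) h' (differentiableAt_id.sub_const γ)
  · intro h
    exact h.comp x (differentiableAt_id.add_const γ)

lemma fderiv_comp_add (g : E → F) (x γ : E) :
    fderiv ℝ (fun y => g (y + γ)) x = fderiv ℝ g (x + γ) := by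
  by_cases h : DifferentiableAt ℝ g (x + γ)
  · have h1 : HasFDerivAt (fun y : E => y + γ) (ContinuousLinearMap.id ℝ E) x :=
      (hasFDerivAt_id x).add_const γ
    have := (h.hasFDerivAt.comp x h1).fderiv
    simpa [Function.comp_def] using this
  · rw [fderiv_zero_of_not_differentiableAt h, fderiv_zero_of_not_differentiableAt]
    rw [diffAt_comp_add_iff]; exact h

lemma iteratedFDeriv_comp_add (g : E → F) (γ : E) :
    ∀ (j : ℕ) (x : E), iteratedFDeriv ℝ j (fun y => g (y + γ)) x = iteratedFDeriv ℝ j g (x + γ) := by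
  intro j
  induction j with
  | zero => intro x; ext v; simp
  | succ k ih =>
      intro x
      ext v
      rw [iteratedFDeriv_succ_apply_left, iteratedFDeriv_succ_apply_left]
      have h1 : (iteratedFDeriv ℝ k fun y => g (y + γ))
          = fun x => iteratedFDeriv ℝ k g (x + γ) := funext ih
      rw [h1, fderiv_comp_add (iteratedFDeriv ℝ k g) x γ]

/-- 1D bridge -/
lemma itfd_eq_zero_iff_itd (f : ℝ → ℂ) (j : ℕ) (x : ℝ) :
    iteratedFDeriv ℝ j f x = 0 ↔ iteratedDeriv j f x = 0 := by
  constructor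
  · intro h
    have : iteratedDeriv j f x = iteratedFDeriv ℝ j f x (fun _ => 1) := rfl
    rw [this, h]; simp
  · intro h
    refine ContinuousMultilinearMap.ext fun v => ?_
    have h1 : v = fun i => v i • (fun _ : Fin j => (1:ℝ)) i := by funext i; simp
    rw [h1, ContinuousMultilinearMap.map_smul_univ]
    have : iteratedFDeriv ℝ j f x (fun _ => 1) = iteratedDeriv j f x := rfl
    rw [this, h, smul_zero]
    simp

-- assume stage1+2 names: OG, Sm, etc. Here redeclare minimal for testing


lemma Sm.derivC {f : ℝ → ℂ} (hf : Sm f) : Sm (deriv f) := (contDiff_infty_iff_deriv.mp hf).2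

lemma OG.derivC {f : ℝ → ℂ} {k : ℕ} {x : ℝ} (h : OG f (k+1) x) : OG (deriv f) k x := by
  intro j hj
  rw [itfd_eq_zero_iff_itd]
  have h2 := h (j+1) (by omega)
  rw [itfd_eq_zero_iff_itd] at h2
  rw [← iteratedDeriv_succ']
  exact h2

lemma OG.congrF {f g : E → ℂ} {m : ℕ} {x : E} (h : OG f m x) (he : g = f) : OG g m x := he ▸ h

lemma smC_exp_mul (b : ℂ) : Sm (fun t : ℝ => Complex.exp (b * ↑t)) := by
  apply Complex.contDiff_exp.comp
  exact contDiff_const.mul Complex.ofRealCLM.contDiff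

lemma HasDerivAt.cpowNat {f : ℝ → ℂ} {f' : ℂ} {t : ℝ} (hf : HasDerivAt f f' t) (n : ℕ) :
    HasDerivAt (fun s => f s ^ (n+1)) (((n:ℂ)+1) * f t ^ n * f') t := by
  induction n with
  | zero => simpa using hf
  | succ n ih =>
      have h2 := ih.mul hf
      have hfun : (fun s => f s ^ (n+1+1)) = fun s => f s ^ (n+1) * f s := by
        funext s; rw [pow_succ]
      rw [hfun]
      convert h2 using 1
      · rfl
      case e'_8 => rfl
      push_cast
      ring

lemma oneD_engine (b : ℂ) (hb : b ≠ 0) (h : ℝ → ℂ) (hh : Sm h) (hh0 : h 0 ≠ 0) (m : ℕ)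
    (hOG : OG (fun t : ℝ => (1 - Complex.exp (b * ↑t)) ^ m * h t) (m + 1) 0) : False := by
  set φ : ℝ → ℂ := fun t => 1 - Complex.exp (b * ↑t) with hφdef
  have Smφ : Sm φ := contDiff_const.sub (smC_exp_mul b)
  set ψ : ℕ → ℝ → ℂ := fun k t => φ t ^ k * h t with hψdef
  have Smψ : ∀ k, Sm (ψ k) := fun k => (Smφ.pow k).mul hh
  have hφ0 : φ 0 = 0 := by simp [hφdef]
  have hOGφ : OG φ 1 0 := by
    intro j hj
    have : j = 0 := by omega
    subst this
    ext v
    simp [iteratedFDeriv_zero_apply, hφ0]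
  have hφder : ∀ t : ℝ, HasDerivAt φ (-(b * (1 - φ t))) t := by
    intro t
    have h1 : HasDerivAt (fun t : ℝ => b * (t:ℂ)) b t := by
      simpa using (Complex.ofRealCLM.hasDerivAt (x := t)).const_mul b
    have h2 := h1.cexp
    have h3 : (fun t : ℝ => Complex.exp (b * ↑t)) = fun t : ℝ => 1 - φ t := by
      funext t; simp [hφdef]
    have h4 : HasDerivAt φ (0 - Complex.exp (b * ↑t) * b) t := (hasDerivAt_const t 1).sub h2
    have h5 : Complex.exp (b * ↑t) = 1 - φ t := by simp [hφdef]
    rw [h5] at h4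
    convert h4 using 1
    ring
  have hhder : ∀ t : ℝ, HasDerivAt h (deriv h t) t :=
    fun t => ((hh.differentiable (by simp)) t).hasDerivAt
  have hder : ∀ (k : ℕ) (t : ℝ), deriv (ψ (k+1)) t
      = -(b*(k+1)) * ψ k t + (b*(k+1)) * ψ (k+1) t + φ t ^ (k+1) * deriv h t := by
    intro k t
    have h1 := (hφder t).cpowNat k
    have h2 := h1.mul (hhder t)
    have h3 := h2.deriv
    rw [show ((fun s => φ s ^ (k+1)) * h) = ψ (k+1) from rfl] at h3
    rw [h3, hψdef]
    push_cast
    ring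
  have step : ∀ j : ℕ, OG (ψ (j+1)) (j+2) 0 → OG (ψ j) (j+1) 0 := by
    intro j hstep
    have hc : -(b*((j:ℂ)+1)) ≠ 0 := by
      simp only [neg_ne_zero, mul_ne_zero_iff]
      refine ⟨hb, ?_⟩
      intro hcon
      have : ((j:ℂ)+1) = ((j+1 : ℕ) : ℂ) := by push_cast; ring
      rw [this] at hcon
      exact Nat.cast_ne_zero.2 (Nat.succ_ne_zero j) hcon
    have hrep : ψ j = fun t => (-(b*((j:ℂ)+1)))⁻¹ *
        (deriv (ψ (j+1)) t + (-(b*((j:ℂ)+1))) * ψ (j+1) t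
          + (-1) * (φ t ^ (j+1) * deriv h t)) := by
      funext t
      have := hder j t
      field_simp
      rw [this]
      ring
    have og1 : OG (deriv (ψ (j+1))) (j+1) 0 := hstep.derivC
    have og2 : OG (fun t => (-(b*((j:ℂ)+1))) * ψ (j+1) t) (j+1) 0 :=
      OG.smulC _ (hstep.mono (by omega)) (Smψ _)
    have og3 : OG (fun t => (-1 : ℂ) * (φ t ^ (j+1) * deriv h t)) (j+1) 0 := by
      apply OG.smulC
      · have := (hOGφ.pow Smφ (j+1)).mul (OG.zero_le (deriv h) 0) (Smφ.pow _) hh.derivC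
        simpa using this
      · exact (Smφ.pow _).mul hh.derivC
    have ogsum : OG (fun t => deriv (ψ (j+1)) t + (-(b*((j:ℂ)+1))) * ψ (j+1) t
        + (-1) * (φ t ^ (j+1) * deriv h t)) (j+1) 0 := by
      exact (og1.add og2 (Smψ _).derivC (contDiff_const.mul (Smψ _))).add og3
        ((Smψ _).derivC.add (contDiff_const.mul (Smψ _)))
        (contDiff_const.mul ((Smφ.pow _).mul hh.derivC))
    exact (OG.smulC _ ogsum (((Smψ _).derivC.add (contDiff_const.mul (Smψ _))).add
      (contDiff_const.mul ((Smφ.pow _).mul hh.derivC)))).congrF hrep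
  have chain : ∀ k : ℕ, k ≤ m → OG (ψ (m - k)) (m - k + 1) 0 := by
    intro k
    induction k with
    | zero => intro _; simpa using hOG
    | succ k ih =>
        intro hk
        have h1 := ih (by omega)
        have h2 : m - k = (m - (k+1)) + 1 := by omega
        rw [h2] at h1
        exact step _ h1
  have hfin := chain m (le_refl m)
  simp only [Nat.sub_self] at hfin
  have := og_value hfin (by omega)
  rw [hψdef] at this
  simp at this
  exact hh0 this

end Infra

/-- The dot product of `k ∈ ℤⁿ` with `ω ∈ ℝⁿ`. -/
def zdot {n : ℕ} (k : Fin n → ℤ) (ω : Fin n → ℝ) : ℝ := ∑ i, (k i : ℝ) * ω i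

/-- `Γ = {2πν/λ : ν ∈ {0,1,…,λ-1}ⁿ}`. -/
def GammaSet (n lam : ℕ) : Set (Fin n → ℝ) :=
  Set.range (fun ν : Fin n → Fin lam => fun i => 2 * π * (ν i : ℝ) / (lam : ℝ))

/-- A trigonometric polynomial on `ℝⁿ`. -/
def IsTrigPoly {n : ℕ} (f : (Fin n → ℝ) → ℂ) : Prop :=
  ∃ c : (Fin n → ℤ) → ℂ, (Function.support c).Finite ∧
    ∀ ω, f ω = ∑ᶠ k : Fin n → ℤ, c k * Complex.exp (-Complex.I * ((zdot k ω : ℝ) : ℂ))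

/-- `τ(ω) = λ^{-n/2} ( Σ_{l<N} p_l(λω) e^{i ν_l·ω} + Σ_{N≤l<λⁿ} e^{i ν_l·ω} )`. -/
def tauTW (n lam N : ℕ) (p : ℕ → (Fin n → ℝ) → ℂ) (ν : ℕ → Fin n → ℤ)
    (ω : Fin n → ℝ) : ℂ :=
  (((lam : ℝ) ^ (-(n : ℝ) / 2) : ℝ) : ℂ) *
    ((∑ l ∈ Finset.range N,
        p l (fun i => (lam : ℝ) * ω i) * Complex.exp (Complex.I * ((zdot (ν l) ω : ℝ) : ℂ)))
      + ∑ l ∈ Finset.Ico N (lam ^ n), Complex.exp (Complex.I * ((zdot (ν l) ω : ℝ) : ℂ)))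

/-- The directional wavelet mask
`q_{D,l}(ω) = λ^{-n/2} 2^{-m_l} (1 - e^{-iλξ_l·ω})^{m_l} τ(ω)`. -/
def qD (n lam N : ℕ) (p : ℕ → (Fin n → ℝ) → ℂ) (ν : ℕ → Fin n → ℤ)
    (ξ : Fin n → ℤ) (m : ℕ) (ω : Fin n → ℝ) : ℂ :=
  (((lam : ℝ) ^ (-(n : ℝ) / 2) * ((2 : ℝ) ^ m)⁻¹ : ℝ) : ℂ) *
    (1 - Complex.exp (-Complex.I * (((lam : ℝ) * zdot ξ ω : ℝ) : ℂ))) ^ m *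
    tauTW n lam N p ν ω

/-- The complementary wavelet mask `q_{C,μ}`. -/
def qC (n lam N : ℕ) (p : ℕ → (Fin n → ℝ) → ℂ) (ν : ℕ → Fin n → ℤ)
    (μ : ℕ) (ω : Fin n → ℝ) : ℂ :=
  if μ < N then
    Complex.exp (Complex.I * ((zdot (ν μ) ω : ℝ) : ℂ))
      - (((lam : ℝ) ^ (-(n : ℝ) / 2) : ℝ) : ℂ) * tauTW n lam N p ν ω *
          conj (p μ (fun i => (lam : ℝ) * ω i))
  else
    Complex.exp (Complex.I * ((zdot (ν μ) ω : ℝ) : ℂ))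
      - (((lam : ℝ) ^ (-(n : ℝ) / 2) : ℝ) : ℂ) * tauTW n lam N p ν ω


section TrigInfra

lemma contDiff_zdot {n : ℕ} (k : Fin n → ℤ) {N : WithTop ℕ∞} :
    ContDiff ℝ N (zdot k) := by
  unfold zdot
  exact ContDiff.sum fun i _ => contDiff_const.mul (contDiff_pi.mp contDiff_id i)

lemma sm_zdotC {n : ℕ} (k : Fin n → ℤ) {N : WithTop ℕ∞} :
    ContDiff ℝ N (fun ω : Fin n → ℝ => ((zdot k ω : ℝ) : ℂ)) :=
  Complex.ofRealCLM.contDiff.comp (contDiff_zdot k)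

lemma sm_expI {n : ℕ} (k : Fin n → ℤ) (c : ℂ) {N : WithTop ℕ∞} :
    ContDiff ℝ N (fun ω : Fin n → ℝ => Complex.exp (c * ((zdot k ω : ℝ) : ℂ))) :=
  Complex.contDiff_exp.comp (contDiff_const.mul (sm_zdotC k))

lemma IsTrigPoly.eq_sum {n : ℕ} {f : (Fin n → ℝ) → ℂ} (hf : IsTrigPoly f) :
    ∃ (s : Finset (Fin n → ℤ)) (c : (Fin n → ℤ) → ℂ),
      f = fun ω => ∑ k ∈ s, c k * Complex.exp (-Complex.I * ((zdot k ω : ℝ) : ℂ)) := by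
  obtain ⟨c, hfin, hrep⟩ := hf
  refine ⟨hfin.toFinset, c, funext fun ω => ?_⟩
  rw [hrep ω]
  apply finsum_eq_finset_sum_of_support_subset
  intro k hk
  simp only [Function.mem_support] at hk
  have : c k ≠ 0 := fun h => hk (by simp [h])
  simpa using this

lemma IsTrigPoly.smooth {n : ℕ} {f : (Fin n → ℝ) → ℂ} (hf : IsTrigPoly f) {N : WithTop ℕ∞} :
    ContDiff ℝ N f := by
  obtain ⟨s, c, rfl⟩ := hf.eq_sum
  exact ContDiff.sum fun k _ => contDiff_const.mul (sm_expI k (-Complex.I))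

lemma IsTrigPoly.periodic {n : ℕ} {f : (Fin n → ℝ) → ℂ} (hf : IsTrigPoly f)
    (x : Fin n → ℝ) (g : Fin n → ℤ) :
    f (fun i => x i + 2 * π * (g i)) = f x := by
  obtain ⟨s, c, rfl⟩ := hf.eq_sum
  apply Finset.sum_congr rfl
  intro k _
  congr 1
  have hz : zdot k (fun i => x i + 2 * π * (g i)) = zdot k x + 2 * π * ((∑ i, k i * g i : ℤ) : ℝ) := by
    unfold zdot
    push_cast
    rw [Finset.mul_sum, ← Finset.sum_add_distrib]
    exact Finset.sum_congr rfl fun i _ => by ring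
  rw [hz]
  have he : (-Complex.I * ((zdot k x + 2 * π * ((∑ i, k i * g i : ℤ) : ℝ) : ℝ) : ℂ))
      = -Complex.I * ((zdot k x : ℝ) : ℂ) + (-(∑ i, k i * g i : ℤ) : ℤ) * (2 * (π:ℂ) * Complex.I) := by
    push_cast
    ring
  rw [he, Complex.exp_add, Complex.exp_int_mul_two_pi_mul_I, mul_one]

lemma geom1 (lam : ℕ) (hlam : 2 ≤ lam) (d : ℤ) :
    ∑ k : Fin lam, Complex.exp (Complex.I * (((d : ℝ) * (2 * π * (k : ℕ) / lam)) : ℝ)) =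
      if (lam : ℤ) ∣ d then (lam : ℂ) else 0 := by
  have hlam0 : (lam : ℂ) ≠ 0 := by
    simp only [Ne, Nat.cast_eq_zero]; omega
  set z : ℂ := Complex.exp (2 * π * Complex.I * d / lam) with hz
  have hterm : ∀ k : Fin lam, Complex.exp (Complex.I * (((d : ℝ) * (2 * π * (k : ℕ) / lam)) : ℝ)) = z ^ (k : ℕ) := by
    intro k
    rw [hz, ← Complex.exp_nat_mul]
    congr 1
    push_cast
    field_simp
  rw [Finset.sum_congr rfl (fun k _ => hterm k)]
  rw [Fin.sum_univ_eq_sum_range (fun k => z ^ k) lam]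
  by_cases hdvd : (lam : ℤ) ∣ d
  · obtain ⟨e, rfl⟩ := hdvd
    have hz1 : z = 1 := by
      rw [hz]
      have : 2 * (π:ℂ) * Complex.I * ((lam : ℤ) * e : ℤ) / lam = (e : ℤ) * (2 * π * Complex.I) := by
        push_cast
        field_simp
      rw [this, Complex.exp_int_mul_two_pi_mul_I]
    rw [hz1]
    simp
  · have hzne : z ≠ 1 := by
      intro hcon
      rw [hz, Complex.exp_eq_one_iff] at hcon
      obtain ⟨q, hq⟩ := hcon
      have h2pi : (2 * (π:ℂ) * Complex.I) ≠ 0 := by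
        simp [Real.pi_ne_zero, Complex.I_ne_zero]
      apply hdvd
      refine ⟨q, ?_⟩
      have : (d : ℂ) = (lam : ℂ) * q := by
        field_simp at hq
        have := hq
        -- 2*π*I*d = q * (2*π*I) * lam
        have h3 : (2 * (π:ℂ) * Complex.I) * d = (2 * (π:ℂ) * Complex.I) * (lam * q) := by
          rw [mul_comm] at this ⊢
          linear_combination (2 * (π:ℂ) * Complex.I) * this
        exact mul_left_cancel₀ h2pi h3
      exact_mod_cast this
    rw [geom_sum_eq hzne]
    have hztop : z ^ lam = 1 := by
      rw [hz, ← Complex.exp_nat_mul]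
      have : (lam : ℂ) * (2 * π * Complex.I * d / lam) = (d : ℤ) * (2 * π * Complex.I) := by
        field_simp
      rw [this, Complex.exp_int_mul_two_pi_mul_I]
    rw [hztop]
    simp [if_neg hdvd]


def gam (n lam : ℕ) (g : Fin n → Fin lam) : Fin n → ℝ := fun i => 2 * π * ((g i : ℕ) : ℝ) / lam

def PP {n : ℕ} (N : ℕ) (p : ℕ → (Fin n → ℝ) → ℂ) (l : ℕ) : (Fin n → ℝ) → ℂ :=
  if l < N then p l else fun _ => 1

lemma zdot_add {n : ℕ} (k : Fin n → ℤ) (x y : Fin n → ℝ) :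
    zdot k (x + y) = zdot k x + zdot k y := by
  unfold zdot
  rw [← Finset.sum_add_distrib]
  exact Finset.sum_congr rfl fun i _ => by simp [Pi.add_apply]; ring

lemma tau_eq {n lam N : ℕ} (hNlam : N ≤ lam ^ n) (p : ℕ → (Fin n → ℝ) → ℂ) (ν : ℕ → Fin n → ℤ)
    (x : Fin n → ℝ) :
    tauTW n lam N p ν x = (((lam : ℝ) ^ (-(n : ℝ) / 2) : ℝ) : ℂ) *
      ∑ l ∈ Finset.range (lam ^ n),
        PP N p l (fun i => (lam : ℝ) * x i) * Complex.exp (Complex.I * ((zdot (ν l) x : ℝ) : ℂ)) := by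
  unfold tauTW
  congr 1
  rw [Finset.range_eq_Ico (a := lam ^ n), ← Finset.sum_Ico_consecutive _ (Nat.zero_le N) hNlam]
  congr 1
  · rw [← Finset.range_eq_Ico]
    exact Finset.sum_congr rfl fun l hl => by
      rw [PP, if_pos (Finset.mem_range.mp hl)]
  · exact (Finset.sum_congr rfl fun l hl => by
      rw [PP, if_neg (by simp only [Finset.mem_Ico] at hl; omega), one_mul]).symm

lemma nu_collapse {n lam : ℕ} {ν : ℕ → Fin n → ℤ}
    (hν : ∀ k : Fin n → ℤ, ∃! l : ℕ, l ∈ Finset.range (lam ^ n) ∧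
      ∃ j : Fin n → ℤ, k = fun i => ν l i + (lam : ℤ) * j i)
    {l μ : ℕ} (hl : l < lam ^ n) (hμ : μ < lam ^ n)
    (hdvd : ∀ i, (lam : ℤ) ∣ (ν l i - ν μ i)) : l = μ := by
  choose e he using hdvd
  refine (hν (ν μ)).unique ⟨Finset.mem_range.mpr hl, ⟨fun i => -e i, ?_⟩⟩
    ⟨Finset.mem_range.mpr hμ, ⟨0, by funext i; simp⟩⟩
  funext i
  have := he i
  simp only [mul_neg]
  omega

lemma polyphase {n lam N : ℕ} (hlam : 2 ≤ lam) (hNlam : N ≤ lam ^ n)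
    (p : ℕ → (Fin n → ℝ) → ℂ) (hptrig : ∀ l < N, IsTrigPoly (p l))
    {ν : ℕ → Fin n → ℤ}
    (hν : ∀ k : Fin n → ℤ, ∃! l : ℕ, l ∈ Finset.range (lam ^ n) ∧
      ∃ j : Fin n → ℤ, k = fun i => ν l i + (lam : ℤ) * j i)
    {μ : ℕ} (hμ : μ < lam ^ n) (ω : Fin n → ℝ) :
    ∑ g : Fin n → Fin lam, tauTW n lam N p ν (ω + gam n lam g) *
        Complex.exp (-(Complex.I * ((zdot (ν μ) (gam n lam g) : ℝ) : ℂ)))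
      = (((lam : ℝ) ^ (-(n : ℝ) / 2) : ℝ) : ℂ) * ((lam ^ n : ℕ) : ℂ) *
          (PP N p μ (fun i => (lam : ℝ) * ω i) *
            Complex.exp (Complex.I * ((zdot (ν μ) ω : ℝ) : ℂ))) := by
  have hlam0 : (lam : ℝ) ≠ 0 := by positivity
  -- step 1: rewrite each tau
  have key : ∀ (g : Fin n → Fin lam), ∀ l ∈ Finset.range (lam ^ n),
      (PP N p l (fun i => (lam : ℝ) * (ω + gam n lam g) i) *
        Complex.exp (Complex.I * ((zdot (ν l) (ω + gam n lam g) : ℝ) : ℂ))) *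
        Complex.exp (-(Complex.I * ((zdot (ν μ) (gam n lam g) : ℝ) : ℂ)))
      = (PP N p l (fun i => (lam : ℝ) * ω i) *
          Complex.exp (Complex.I * ((zdot (ν l) ω : ℝ) : ℂ))) *
          Complex.exp (Complex.I *
            (((∑ i, ((ν l i - ν μ i : ℤ) : ℝ) * gam n lam g i) : ℝ) : ℂ)) := by
    intro g l _
    have hper : PP N p l (fun i => (lam : ℝ) * (ω + gam n lam g) i)
        = PP N p l (fun i => (lam : ℝ) * ω i) := by
      have harg : (fun i => (lam : ℝ) * (ω + gam n lam g) i)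
          = fun i => ((lam : ℝ) * ω i) + 2 * π * (((g i : ℕ) : ℤ) : ℝ) := by
        funext i
        simp only [Pi.add_apply, gam]
        push_cast
        field_simp
      rw [harg]
      by_cases hl : l < N
      · simp only [PP, if_pos hl]
        exact (hptrig l hl).periodic (fun i => (lam : ℝ) * ω i) (fun i => ((g i : ℕ) : ℤ))
      · simp only [PP, if_neg hl]
    rw [hper]
    have hzd : zdot (ν l) (ω + gam n lam g) = zdot (ν l) ω + zdot (ν l) (gam n lam g) :=
      zdot_add _ _ _
    have hzsub : zdot (ν l) (gam n lam g) - zdot (ν μ) (gam n lam g)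
        = ∑ i, ((ν l i - ν μ i : ℤ) : ℝ) * gam n lam g i := by
      unfold zdot
      rw [← Finset.sum_sub_distrib]
      exact Finset.sum_congr rfl fun i _ => by push_cast; ring
    rw [mul_assoc, mul_assoc]
    congr 1
    rw [← Complex.exp_add, ← Complex.exp_add]
    congr 1
    rw [hzd, ← hzsub]
    push_cast
    ring
  -- step 2: the inner geometric sum
  have inner : ∀ l ∈ Finset.range (lam ^ n),
      (∑ g : Fin n → Fin lam, Complex.exp (Complex.I *
        (((∑ i, ((ν l i - ν μ i : ℤ) : ℝ) * gam n lam g i) : ℝ) : ℂ)))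
      = if l = μ then ((lam ^ n : ℕ) : ℂ) else 0 := by
    intro l hl
    have hsplit : ∀ g : Fin n → Fin lam,
        Complex.exp (Complex.I * (((∑ i, ((ν l i - ν μ i : ℤ) : ℝ) * gam n lam g i) : ℝ) : ℂ))
        = ∏ i, Complex.exp (Complex.I *
            ((((ν l i - ν μ i : ℤ) : ℝ) * (2 * π * ((g i : ℕ) : ℝ) / lam) : ℝ) : ℂ)) := by
      intro g
      rw [← Complex.exp_sum]
      congr 1
      unfold gam
      push_cast
      rw [Finset.mul_sum]
    rw [Finset.sum_congr rfl fun g _ => hsplit g]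
    have hpiF : (Finset.univ : Finset (Fin n → Fin lam)) = Fintype.piFinset (fun _ => Finset.univ) := by
      simp
    have hprod := Finset.prod_univ_sum (fun _ : Fin n => (Finset.univ : Finset (Fin lam)))
      (fun i k => Complex.exp (Complex.I *
        ((((ν l i - ν μ i : ℤ) : ℝ) * (2 * π * ((k : ℕ) : ℝ) / lam) : ℝ) : ℂ)))
    rw [hpiF, ← hprod]
    have hfac : ∀ i : Fin n,
        (∑ k : Fin lam, Complex.exp (Complex.I *
          ((((ν l i - ν μ i : ℤ) : ℝ) * (2 * π * ((k : ℕ) : ℝ) / lam) : ℝ) : ℂ)))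
        = if (lam : ℤ) ∣ (ν l i - ν μ i) then (lam : ℂ) else 0 :=
      fun i => geom1 lam hlam (ν l i - ν μ i)
    rw [Finset.prod_congr rfl fun i _ => hfac i]
    by_cases hall : ∀ i, (lam : ℤ) ∣ (ν l i - ν μ i)
    · have hlμ : l = μ := nu_collapse hν (Finset.mem_range.mp hl) hμ hall
      rw [if_pos hlμ]
      rw [Finset.prod_congr rfl fun i _ => if_pos (hall i)]
      simp
    · push_neg at hall
      obtain ⟨i0, hi0⟩ := hall
      rw [if_neg]
      · exact Finset.prod_eq_zero (Finset.mem_univ i0) (if_neg hi0)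
      · intro hcon
        subst hcon
        exact hi0 (by simp)
  -- step 3: assemble
  calc ∑ g : Fin n → Fin lam, tauTW n lam N p ν (ω + gam n lam g) *
        Complex.exp (-(Complex.I * ((zdot (ν μ) (gam n lam g) : ℝ) : ℂ)))
      = ∑ g : Fin n → Fin lam, (((lam : ℝ) ^ (-(n : ℝ) / 2) : ℝ) : ℂ) *
          ∑ l ∈ Finset.range (lam ^ n),
            ((PP N p l (fun i => (lam : ℝ) * ω i) *
              Complex.exp (Complex.I * ((zdot (ν l) ω : ℝ) : ℂ))) *
              Complex.exp (Complex.I *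
                (((∑ i, ((ν l i - ν μ i : ℤ) : ℝ) * gam n lam g i) : ℝ) : ℂ))) := by
        refine Finset.sum_congr rfl fun g _ => ?_
        rw [tau_eq hNlam p ν, mul_assoc, Finset.sum_mul]
        congr 1
        exact Finset.sum_congr rfl fun l hl => key g l hl
    _ = (((lam : ℝ) ^ (-(n : ℝ) / 2) : ℝ) : ℂ) *
          ∑ l ∈ Finset.range (lam ^ n),
            ((PP N p l (fun i => (lam : ℝ) * ω i) *
              Complex.exp (Complex.I * ((zdot (ν l) ω : ℝ) : ℂ))) *
              ∑ g : Fin n → Fin lam, Complex.exp (Complex.I *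
                (((∑ i, ((ν l i - ν μ i : ℤ) : ℝ) * gam n lam g i) : ℝ) : ℂ))) := by
        rw [← Finset.mul_sum, Finset.sum_comm]
        congr 1
        exact Finset.sum_congr rfl fun l _ => by rw [Finset.mul_sum]
    _ = (((lam : ℝ) ^ (-(n : ℝ) / 2) : ℝ) : ℂ) * ((lam ^ n : ℕ) : ℂ) *
          (PP N p μ (fun i => (lam : ℝ) * ω i) *
            Complex.exp (Complex.I * ((zdot (ν μ) ω : ℝ) : ℂ))) := by
        rw [Finset.sum_congr rfl fun l hl => by rw [inner l hl]]
        rw [Finset.sum_eq_single μ]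
        · rw [if_pos rfl]; ring
        · intro l _ hlne
          rw [if_neg hlne, mul_zero]
        · intro hcon
          exact absurd (Finset.mem_range.mpr hμ) hcon


lemma rpow_fact1 {n lam : ℕ} (hlam : 2 ≤ lam) :
    ((lam : ℝ) ^ (-(n : ℝ) / 2)) * ((lam ^ n : ℕ) : ℝ) = (lam : ℝ) ^ ((n : ℝ) / 2) := by
  have hp : (0:ℝ) < lam := by positivity
  have h1 : ((lam ^ n : ℕ) : ℝ) = (lam : ℝ) ^ ((n : ℕ) : ℝ) := by
    push_cast
    rw [Real.rpow_natCast]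
  rw [h1, ← Real.rpow_add hp]
  congr 1
  ring

lemma rpow_fact2 {n lam : ℕ} (hlam : 2 ≤ lam) :
    ((lam : ℝ) ^ (-(n : ℝ) / 2)) * ((lam : ℝ) ^ ((n : ℝ) / 2)) = 1 := by
  have hp : (0:ℝ) < lam := by positivity
  rw [← Real.rpow_add hp, show (-(n : ℝ) / 2 + (n : ℝ) / 2) = 0 by ring, Real.rpow_zero]

lemma rpow_pos2 {n lam : ℕ} (hlam : 2 ≤ lam) : (0:ℝ) < (lam : ℝ) ^ ((n : ℝ) / 2) :=
  Real.rpow_pos_of_pos (by positivity) _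

lemma rpow_posneg {n lam : ℕ} (hlam : 2 ≤ lam) : (0:ℝ) < (lam : ℝ) ^ (-(n : ℝ) / 2) :=
  Real.rpow_pos_of_pos (by positivity) _

lemma zdot_zero {n : ℕ} (k : Fin n → ℤ) : zdot k (0 : Fin n → ℝ) = 0 := by
  unfold zdot; simp

lemma sm_PP {n lam N : ℕ} {p : ℕ → (Fin n → ℝ) → ℂ} (hptrig : ∀ l < N, IsTrigPoly (p l))
    (l : ℕ) {Nn : WithTop ℕ∞} :
    ContDiff ℝ Nn (fun ω : Fin n → ℝ => PP N p l (fun i => (lam : ℝ) * ω i)) := by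
  have hlin : ContDiff ℝ Nn (fun ω : Fin n → ℝ => (fun i => (lam : ℝ) * ω i)) :=
    contDiff_pi.mpr fun i => contDiff_const.mul (contDiff_pi.mp contDiff_id i)
  by_cases hl : l < N
  · simp only [PP, if_pos hl]
    exact ((hptrig l hl).smooth).comp hlin
  · simp only [PP, if_neg hl]
    exact contDiff_const

lemma sm_tau {n lam N : ℕ} (hNlam : N ≤ lam ^ n) {p : ℕ → (Fin n → ℝ) → ℂ}
    (hptrig : ∀ l < N, IsTrigPoly (p l)) (ν : ℕ → Fin n → ℤ) {Nn : WithTop ℕ∞} :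
    ContDiff ℝ Nn (tauTW n lam N p ν) := by
  have : tauTW n lam N p ν = fun x => (((lam : ℝ) ^ (-(n : ℝ) / 2) : ℝ) : ℂ) *
      ∑ l ∈ Finset.range (lam ^ n),
        PP N p l (fun i => (lam : ℝ) * x i) * Complex.exp (Complex.I * ((zdot (ν l) x : ℝ) : ℂ)) :=
    funext fun x => tau_eq hNlam p ν x
  rw [this]
  exact contDiff_const.mul (ContDiff.sum fun l _ => (sm_PP hptrig l).mul (sm_expI _ _))

lemma tau_zero {n lam N : ℕ} (hNlam : N ≤ lam ^ n) (hlam : 2 ≤ lam)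
    {p : ℕ → (Fin n → ℝ) → ℂ} (hp0 : ∀ l < N, p l 0 = 1) (ν : ℕ → Fin n → ℤ) :
    tauTW n lam N p ν 0 = (((lam : ℝ) ^ ((n : ℝ) / 2) : ℝ) : ℂ) := by
  rw [tau_eq hNlam p ν]
  have hterm : ∀ l ∈ Finset.range (lam ^ n),
      PP N p l (fun i => (lam : ℝ) * (0 : Fin n → ℝ) i) *
        Complex.exp (Complex.I * ((zdot (ν l) (0 : Fin n → ℝ) : ℝ) : ℂ)) = 1 := by
    intro l _
    rw [zdot_zero]
    have harg : (fun i => (lam : ℝ) * (0 : Fin n → ℝ) i) = (0 : Fin n → ℝ) := by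
      funext i; simp
    rw [harg]
    by_cases hl : l < N
    · simp only [PP, if_pos hl, hp0 l hl]
      simp
    · simp only [PP, if_neg hl]
      simp
  rw [Finset.sum_congr rfl hterm]
  simp only [Finset.sum_const, Finset.card_range, nsmul_eq_mul, mul_one]
  rw [← Complex.ofReal_natCast, ← Complex.ofReal_mul, rpow_fact1 hlam]

end TrigInfra

/-- `q` has a zero of order at least `m` at `x`. -/
def HasZeroOfOrderAtLeast {n : ℕ} (q : (Fin n → ℝ) → ℂ) (m : ℕ) (x : Fin n → ℝ) : Prop :=
  ∀ j, j < m → iteratedFDeriv ℝ j q x = 0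

/-- `q` has a zero of order exactly `m` at `x`. -/
def HasZeroOfOrderExactly {n : ℕ} (q : (Fin n → ℝ) → ℂ) (m : ℕ) (x : Fin n → ℝ) : Prop :=
  HasZeroOfOrderAtLeast q m x ∧ iteratedFDeriv ℝ m q x ≠ 0

/-- vanishing moments of the TWFPD. Each directional wavelet mask
`q_{D,l}` has a zero of order exactly `m_l` at `0`; each complementary wavelet mask
`q_{C,μ}` has a zero of order at least `min{a,b} ≥ 1` at `0`. -/
theorem twfpd_vanishing_moments (n lam N : ℕ) (hn : 1 ≤ n) (hN : 1 ≤ N) (hlam : 2 ≤ lam)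
    (hNlam : N ≤ lam ^ n)
    (ξ : ℕ → Fin n → ℤ) (hξ : ∀ l < N, ξ l ≠ 0)
    (m : ℕ → ℕ) (hm : ∀ l < N, 1 ≤ m l)
    (ν : ℕ → Fin n → ℤ)
    (hν : ∀ k : Fin n → ℤ, ∃! l : ℕ, l ∈ Finset.range (lam ^ n) ∧
      ∃ j : Fin n → ℤ, k = fun i => ν l i + (lam : ℤ) * j i)
    (p : ℕ → (Fin n → ℝ) → ℂ)
    (hptrig : ∀ l < N, IsTrigPoly (p l))
    (hp0 : ∀ l < N, p l 0 = 1)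
    (hp : ∀ l < N, ∀ ω : Fin n → ℝ,
      ‖p l ω‖ ^ 2 = 1 - Real.sin (zdot (ξ l) ω / 2) ^ (2 * m l)) :
    (∀ l < N, HasZeroOfOrderExactly (qD n lam N p ν (ξ l) (m l)) (m l) 0) ∧
    (∀ a b : ℕ, 1 ≤ a → 1 ≤ b →
      (∀ γ ∈ GammaSet n lam, γ ≠ 0 → HasZeroOfOrderAtLeast (tauTW n lam N p ν) a γ) →
      HasZeroOfOrderAtLeast
        (fun ω => tauTW n lam N p ν ω - (((lam : ℝ) ^ ((n : ℝ) / 2) : ℝ) : ℂ)) b 0 →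
      (1 ≤ min a b ∧
        ∀ μ < lam ^ n, HasZeroOfOrderAtLeast (qC n lam N p ν μ) (min a b) 0)) := by
  have hlamr : (0:ℝ) < lam := by positivity
  have hrpos : (0:ℝ) < (lam : ℝ) ^ (-(n : ℝ) / 2) := rpow_posneg hlam
  have Smτ : Sm (tauTW n lam N p ν) := sm_tau hNlam hptrig ν
  constructor
  · -- part (i) : directional masks
    intro l hl
    have hml := hm l hl
    set gξ : (Fin n → ℝ) → ℂ :=
      fun ω => 1 - Complex.exp (-Complex.I * (((lam : ℝ) * zdot (ξ l) ω : ℝ) : ℂ)) with hgdef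
    have Smg : Sm gξ := by
      refine contDiff_const.sub (Complex.contDiff_exp.comp ?_)
      exact contDiff_const.mul
        (Complex.ofRealCLM.contDiff.comp (contDiff_const.mul (contDiff_zdot (ξ l))))
    have hg0 : gξ 0 = 0 := by simp [hgdef, zdot_zero]
    have hOGg : OG gξ 1 0 := by
      intro j hj
      have hj0 : j = 0 := by omega
      subst hj0
      ext w
      simp [iteratedFDeriv_zero_apply, hg0]
    set C : ℂ := (((lam : ℝ) ^ (-(n : ℝ) / 2) * ((2:ℝ) ^ (m l))⁻¹ : ℝ) : ℂ) with hCdef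
    have hqDeq : qD n lam N p ν (ξ l) (m l) = fun ω =>
        C * (gξ ω ^ (m l) * tauTW n lam N p ν ω) := by
      funext ω
      simp only [qD, hgdef, hCdef]
      ring
    have SmqD : Sm (qD n lam N p ν (ξ l) (m l)) := by
      rw [hqDeq]
      exact contDiff_const.mul ((Smg.pow (m l)).mul Smτ)
    have lower : OG (qD n lam N p ν (ξ l) (m l)) (m l) 0 := by
      have og1 : OG (fun ω => gξ ω ^ (m l) * tauTW n lam N p ν ω) (m l) 0 := by
        have := (hOGg.pow Smg (m l)).mul (OG.zero_le (tauTW n lam N p ν) 0)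
          (Smg.pow (m l)) Smτ
        simpa using this
      exact (og1.smulC C ((Smg.pow (m l)).mul Smτ)).congrF hqDeq
    refine ⟨lower, ?_⟩
    intro hcon
    have hOGfull : OG (qD n lam N p ν (ξ l) (m l)) (m l + 1) 0 := by
      intro j hj
      rcases Nat.lt_or_ge j (m l) with h | h
      · exact lower j h
      · have hje : j = m l := by omega
        subst hje
        exact hcon
    obtain ⟨i₀, hi₀⟩ : ∃ i, ξ l i ≠ 0 := Function.ne_iff.mp (hξ l hl)
    set v : Fin n → ℝ := fun j => if j = i₀ then 1 else 0 with hvdef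
    set A : ℝ →L[ℝ] (Fin n → ℝ) :=
      ContinuousLinearMap.smulRight (ContinuousLinearMap.id ℝ ℝ) v with hAdef
    have hzv : ∀ t : ℝ, zdot (ξ l) (A t) = ((ξ l i₀ : ℤ) : ℝ) * t := by
      intro t
      unfold zdot
      rw [Finset.sum_eq_single i₀]
      · simp [hAdef, hvdef]
      · intro i _ hne
        simp [hAdef, hvdef, hne]
      · intro hmem
        exact absurd (Finset.mem_univ i₀) hmem
    set br : ℝ := (lam : ℝ) * ((ξ l i₀ : ℤ) : ℝ) with hbrdef
    have hbrne : br ≠ 0 := mul_ne_zero (by positivity) (Int.cast_ne_zero.mpr hi₀)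
    set bb : ℂ := -(Complex.I * (br : ℂ)) with hbbdef
    have hbb : bb ≠ 0 := by
      simp only [hbbdef, neg_ne_zero, mul_ne_zero_iff]
      exact ⟨Complex.I_ne_zero, Complex.ofReal_ne_zero.mpr hbrne⟩
    set h1 : ℝ → ℂ := fun t => tauTW n lam N p ν (A t) with hh1def
    have Smh1 : Sm h1 := Smτ.comp A.contDiff
    have hh10 : h1 0 ≠ 0 := by
      have hA0 : A (0:ℝ) = 0 := map_zero A
      rw [hh1def]
      simp only [hA0]
      rw [tau_zero hNlam hlam hp0 ν]
      exact Complex.ofReal_ne_zero.mpr (ne_of_gt (rpow_pos2 hlam))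
    have hcomp : OG (fun t => qD n lam N p ν (ξ l) (m l) (A t)) (m l + 1) 0 := by
      refine OG.comp_clm A ?_ SmqD
      rw [map_zero]
      exact hOGfull
    have hEq : (fun t => qD n lam N p ν (ξ l) (m l) (A t))
        = fun t : ℝ => C * ((1 - Complex.exp (bb * (t:ℂ))) ^ (m l) * h1 t) := by
      funext t
      rw [hqDeq]
      have harg : -Complex.I * (((lam : ℝ) * zdot (ξ l) (A t) : ℝ) : ℂ) = bb * (t:ℂ) := by
        rw [hzv t, hbbdef, hbrdef]
        push_cast
        ring
      simp only [hgdef, harg, hh1def]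
    have Smψ : Sm (fun t : ℝ => (1 - Complex.exp (bb * (t:ℂ))) ^ (m l) * h1 t) :=
      ((contDiff_const.sub (smC_exp_mul bb)).pow (m l)).mul Smh1
    have hCne : C ≠ 0 := by
      rw [hCdef, Complex.ofReal_ne_zero]
      positivity
    have hOGψ' : OG (fun t : ℝ => C * ((1 - Complex.exp (bb * (t:ℂ))) ^ (m l) * h1 t)) (m l + 1) 0 :=
      hcomp.congrF hEq.symm
    have hOGψ : OG (fun t : ℝ => (1 - Complex.exp (bb * (t:ℂ))) ^ (m l) * h1 t) (m l + 1) 0 := by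
      have h2 := hOGψ'.smulC C⁻¹ (contDiff_const.mul Smψ)
      refine h2.congrF ?_
      funext t
      rw [inv_mul_cancel_left₀ hCne]
    exact absurd hOGψ (fun hcc => oneD_engine bb hbb h1 Smh1 hh10 (m l) hcc)
  · -- part (ii)
    intro a b ha hb hγ h0
    refine ⟨by omega, ?_⟩
    intro μ hμ
    have hrc1 : (((lam : ℝ) ^ (-(n : ℝ) / 2) : ℝ) : ℂ) * (((lam : ℝ) ^ ((n : ℝ) / 2) : ℝ) : ℂ) = 1 := by
      rw [← Complex.ofReal_mul, rpow_fact2 hlam, Complex.ofReal_one]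
    have hrlam : (((lam : ℝ) ^ (-(n : ℝ) / 2) : ℝ) : ℂ) * ((lam ^ n : ℕ) : ℂ)
        = (((lam : ℝ) ^ ((n : ℝ) / 2) : ℝ) : ℂ) := by
      rw [← Complex.ofReal_natCast, ← Complex.ofReal_mul, rpow_fact1 hlam]
    have hrr1 : (((lam : ℝ) ^ (-(n : ℝ) / 2) : ℝ) : ℂ) *
        ((((lam : ℝ) ^ (-(n : ℝ) / 2) : ℝ) : ℂ) * ((lam ^ n : ℕ) : ℂ)) = 1 := by
      rw [hrlam, hrc1]
    have SmE : Sm (fun ω : Fin n → ℝ => Complex.exp (Complex.I * ((zdot (ν μ) ω : ℝ) : ℂ))) :=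
      sm_expI (ν μ) Complex.I
    have hlampos : 0 < lam := by omega
    set g₀ : Fin n → Fin lam := fun _ => ⟨0, hlampos⟩ with hg₀def
    have hgam0 : gam n lam g₀ = 0 := by
      funext i
      simp [gam, hg₀def]
    have hgammem : ∀ g : Fin n → Fin lam, gam n lam g ∈ GammaSet n lam := fun g => ⟨g, rfl⟩
    have hgamne : ∀ g : Fin n → Fin lam, g ≠ g₀ → gam n lam g ≠ 0 := by
      intro g hg hc
      obtain ⟨i, hi⟩ := Function.ne_iff.mp hg
      have hvi : 0 < ((g i : ℕ) : ℝ) := by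
        have hne : (g i : ℕ) ≠ 0 := by
          intro hcc
          exact hi (by rw [hg₀def]; exact Fin.ext hcc)
        positivity
      have := congrFun hc i
      simp only [gam, Pi.zero_apply] at this
      have hpos : 0 < 2 * π * ((g i : ℕ) : ℝ) / lam := by positivity
      rw [this] at hpos
      exact lt_irrefl 0 hpos
    have hOGtrans : ∀ g : Fin n → Fin lam, g ≠ g₀ →
        OG (fun y => tauTW n lam N p ν (y + gam n lam g)) a 0 := by
      intro g hg j hj
      rw [iteratedFDeriv_comp_add (tauTW n lam N p ν) (gam n lam g) j 0, zero_add]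
      exact hγ (gam n lam g) (hgammem g) (hgamne g hg) j hj
    have Smtrans : ∀ g : Fin n → Fin lam, Sm (fun y => tauTW n lam N p ν (y + gam n lam g)) :=
      fun g => Smτ.comp (contDiff_id.add contDiff_const)
    have hpp := fun ω => polyphase (n := n) hlam hNlam p hptrig hν hμ ω
    by_cases hμN : μ < N
    · -- complementary mask for μ < N
      have hPPp : PP N p μ = p μ := by rw [PP, if_pos hμN]
      have hEinv : ∀ ω : Fin n → ℝ,
          Complex.exp (Complex.I * ((zdot (ν μ) ω : ℝ) : ℂ)) *
            Complex.exp (-(Complex.I * ((zdot (ν μ) ω : ℝ) : ℂ))) = 1 := by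
        intro ω
        rw [← Complex.exp_add, add_neg_cancel, Complex.exp_zero]
      have hppc : ∀ ω : Fin n → ℝ,
          (∑ g : Fin n → Fin lam, conj (tauTW n lam N p ν (ω + gam n lam g)) *
            Complex.exp (Complex.I * ((zdot (ν μ) (gam n lam g) : ℝ) : ℂ)))
          = (((lam : ℝ) ^ (-(n : ℝ) / 2) : ℝ) : ℂ) * ((lam ^ n : ℕ) : ℂ) *
            (conj (p μ (fun i => (lam : ℝ) * ω i)) *
              Complex.exp (-(Complex.I * ((zdot (ν μ) ω : ℝ) : ℂ)))) := by
        intro ω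
        have h1 := congrArg (starRingEnd ℂ) (hpp ω)
        simp only [map_sum, map_mul, ← Complex.exp_conj, map_neg, Complex.conj_I,
          Complex.conj_ofReal, neg_mul, neg_neg, map_natCast, hPPp] at h1
        exact h1
      have hCSsplit : ∀ ω : Fin n → ℝ,
          (∑ g : Fin n → Fin lam, conj (tauTW n lam N p ν (ω + gam n lam g)) *
            Complex.exp (Complex.I * ((zdot (ν μ) (gam n lam g) : ℝ) : ℂ)))
          = conj (tauTW n lam N p ν ω) +
            ∑ g ∈ Finset.univ.erase g₀, conj (tauTW n lam N p ν (ω + gam n lam g)) *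
              Complex.exp (Complex.I * ((zdot (ν μ) (gam n lam g) : ℝ) : ℂ)) := by
        intro ω
        rw [← Finset.add_sum_erase _ _ (Finset.mem_univ g₀)]
        congr 1
        rw [hgam0, add_zero, zdot_zero]
        simp
      have hqCeq : qC n lam N p ν μ = fun ω =>
          Complex.exp (Complex.I * ((zdot (ν μ) ω : ℝ) : ℂ)) *
            (-(((((lam : ℝ) ^ (-(n : ℝ) / 2) : ℝ) : ℂ) * tauTW n lam N p ν ω - 1)
              + conj ((((lam : ℝ) ^ (-(n : ℝ) / 2) : ℝ) : ℂ) * tauTW n lam N p ν ω - 1)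
              + ((((lam : ℝ) ^ (-(n : ℝ) / 2) : ℝ) : ℂ) * tauTW n lam N p ν ω - 1) *
                conj ((((lam : ℝ) ^ (-(n : ℝ) / 2) : ℝ) : ℂ) * tauTW n lam N p ν ω - 1)))
          + (-((((lam : ℝ) ^ (-(n : ℝ) / 2) : ℝ) : ℂ) * (((lam : ℝ) ^ (-(n : ℝ) / 2) : ℝ) : ℂ))) *
              (tauTW n lam N p ν ω *
                (Complex.exp (Complex.I * ((zdot (ν μ) ω : ℝ) : ℂ)) *
                  ∑ g ∈ Finset.univ.erase g₀, conj (tauTW n lam N p ν (ω + gam n lam g)) *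
                    Complex.exp (Complex.I * ((zdot (ν μ) (gam n lam g) : ℝ) : ℂ)))) := by
        funext ω
        simp only [qC, if_pos hμN]
        have h1 : conj (tauTW n lam N p ν ω) +
            (∑ g ∈ Finset.univ.erase g₀, conj (tauTW n lam N p ν (ω + gam n lam g)) *
              Complex.exp (Complex.I * ((zdot (ν μ) (gam n lam g) : ℝ) : ℂ)))
            = (((lam : ℝ) ^ (-(n : ℝ) / 2) : ℝ) : ℂ) * ((lam ^ n : ℕ) : ℂ) *
              (conj (p μ (fun i => (lam : ℝ) * ω i)) *
                Complex.exp (-(Complex.I * ((zdot (ν μ) ω : ℝ) : ℂ)))) := by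
          rw [← hCSsplit ω]
          exact hppc ω
        have h2 := hEinv ω
        have hcs : conj ((((lam : ℝ) ^ (-(n : ℝ) / 2) : ℝ) : ℂ) * tauTW n lam N p ν ω - 1)
            = (((lam : ℝ) ^ (-(n : ℝ) / 2) : ℝ) : ℂ) * conj (tauTW n lam N p ν ω) - 1 := by
          simp [map_sub, map_mul, Complex.conj_ofReal]
        rw [hcs]
        linear_combination
          ((((lam : ℝ) ^ (-(n : ℝ) / 2) : ℝ) : ℂ) * (((lam : ℝ) ^ (-(n : ℝ) / 2) : ℝ) : ℂ) *
            tauTW n lam N p ν ω * Complex.exp (Complex.I * ((zdot (ν μ) ω : ℝ) : ℂ))) * h1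
          + ((((lam : ℝ) ^ (-(n : ℝ) / 2) : ℝ) : ℂ) * tauTW n lam N p ν ω *
              conj (p μ (fun i => (lam : ℝ) * ω i)) *
              Complex.exp (Complex.I * ((zdot (ν μ) ω : ℝ) : ℂ)) *
              Complex.exp (-(Complex.I * ((zdot (ν μ) ω : ℝ) : ℂ)))) * hrr1
          + ((((lam : ℝ) ^ (-(n : ℝ) / 2) : ℝ) : ℂ) * tauTW n lam N p ν ω *
              conj (p μ (fun i => (lam : ℝ) * ω i))) * h2
      -- now the OG bookkeeping
      have Smsub : Sm (fun ω => tauTW n lam N p ν ω - (((lam : ℝ) ^ ((n : ℝ) / 2) : ℝ) : ℂ)) :=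
        Smτ.sub contDiff_const
      have hOGs : OG (fun ω => (((lam : ℝ) ^ (-(n : ℝ) / 2) : ℝ) : ℂ) *
          tauTW n lam N p ν ω - 1) b 0 := by
        have h0' : OG (fun ω => tauTW n lam N p ν ω -
            (((lam : ℝ) ^ ((n : ℝ) / 2) : ℝ) : ℂ)) b 0 := h0
        have hsm := (h0'.smulC (((lam : ℝ) ^ (-(n : ℝ) / 2) : ℝ) : ℂ) Smsub)
        refine hsm.congrF ?_
        funext ω
        rw [mul_sub, hrc1]
      have Sms : Sm (fun ω => (((lam : ℝ) ^ (-(n : ℝ) / 2) : ℝ) : ℂ) *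
          tauTW n lam N p ν ω - 1) := (contDiff_const.mul Smτ).sub contDiff_const
      have hOGcs : OG (fun ω => conj ((((lam : ℝ) ^ (-(n : ℝ) / 2) : ℝ) : ℂ) *
          tauTW n lam N p ν ω - 1)) b 0 := hOGs.conjC Sms
      have Smcs : Sm (fun ω => conj ((((lam : ℝ) ^ (-(n : ℝ) / 2) : ℝ) : ℂ) *
          tauTW n lam N p ν ω - 1)) := Sms.conj
      have hOGin : OG (fun ω => ((((lam : ℝ) ^ (-(n : ℝ) / 2) : ℝ) : ℂ) * tauTW n lam N p ν ω - 1)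
          + conj ((((lam : ℝ) ^ (-(n : ℝ) / 2) : ℝ) : ℂ) * tauTW n lam N p ν ω - 1)
          + ((((lam : ℝ) ^ (-(n : ℝ) / 2) : ℝ) : ℂ) * tauTW n lam N p ν ω - 1) *
            conj ((((lam : ℝ) ^ (-(n : ℝ) / 2) : ℝ) : ℂ) * tauTW n lam N p ν ω - 1)) b 0 := by
        refine OG.add (hOGs.add hOGcs Sms Smcs) ?_ (Sms.add Smcs) (Sms.mul Smcs)
        exact (hOGs.mul hOGcs Sms Smcs).mono (by omega)
      have Smin : Sm (fun ω => ((((lam : ℝ) ^ (-(n : ℝ) / 2) : ℝ) : ℂ) * tauTW n lam N p ν ω - 1)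
          + conj ((((lam : ℝ) ^ (-(n : ℝ) / 2) : ℝ) : ℂ) * tauTW n lam N p ν ω - 1)
          + ((((lam : ℝ) ^ (-(n : ℝ) / 2) : ℝ) : ℂ) * tauTW n lam N p ν ω - 1) *
            conj ((((lam : ℝ) ^ (-(n : ℝ) / 2) : ℝ) : ℂ) * tauTW n lam N p ν ω - 1)) :=
        (Sms.add Smcs).add (Sms.mul Smcs)
      have hOGneg : OG (fun ω =>
          -(((((lam : ℝ) ^ (-(n : ℝ) / 2) : ℝ) : ℂ) * tauTW n lam N p ν ω - 1)
            + conj ((((lam : ℝ) ^ (-(n : ℝ) / 2) : ℝ) : ℂ) * tauTW n lam N p ν ω - 1)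
            + ((((lam : ℝ) ^ (-(n : ℝ) / 2) : ℝ) : ℂ) * tauTW n lam N p ν ω - 1) *
              conj ((((lam : ℝ) ^ (-(n : ℝ) / 2) : ℝ) : ℂ) * tauTW n lam N p ν ω - 1))) b 0 := by
        refine (hOGin.smulC (-1) Smin).congrF ?_
        funext ω
        ring
      have Smneg : Sm (fun ω =>
          -(((((lam : ℝ) ^ (-(n : ℝ) / 2) : ℝ) : ℂ) * tauTW n lam N p ν ω - 1)
            + conj ((((lam : ℝ) ^ (-(n : ℝ) / 2) : ℝ) : ℂ) * tauTW n lam N p ν ω - 1)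
            + ((((lam : ℝ) ^ (-(n : ℝ) / 2) : ℝ) : ℂ) * tauTW n lam N p ν ω - 1) *
              conj ((((lam : ℝ) ^ (-(n : ℝ) / 2) : ℝ) : ℂ) * tauTW n lam N p ν ω - 1))) :=
        Smin.neg
      have hA : OG (fun ω => Complex.exp (Complex.I * ((zdot (ν μ) ω : ℝ) : ℂ)) *
          (-(((((lam : ℝ) ^ (-(n : ℝ) / 2) : ℝ) : ℂ) * tauTW n lam N p ν ω - 1)
            + conj ((((lam : ℝ) ^ (-(n : ℝ) / 2) : ℝ) : ℂ) * tauTW n lam N p ν ω - 1)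
            + ((((lam : ℝ) ^ (-(n : ℝ) / 2) : ℝ) : ℂ) * tauTW n lam N p ν ω - 1) *
              conj ((((lam : ℝ) ^ (-(n : ℝ) / 2) : ℝ) : ℂ) * tauTW n lam N p ν ω - 1)))) b 0 := by
        have := (OG.zero_le (fun ω : Fin n → ℝ =>
          Complex.exp (Complex.I * ((zdot (ν μ) ω : ℝ) : ℂ))) 0).mul hOGneg SmE Smneg
        simpa using this
      -- B part
      have hOGterm : ∀ g ∈ Finset.univ.erase g₀,
          OG (fun ω => conj (tauTW n lam N p ν (ω + gam n lam g)) *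
            Complex.exp (Complex.I * ((zdot (ν μ) (gam n lam g) : ℝ) : ℂ))) a 0 := by
        intro g hg
        have hgne : g ≠ g₀ := (Finset.mem_erase.mp hg).1
        have := ((hOGtrans g hgne).conjC (Smtrans g)).mul
          (OG.zero_le (fun _ => Complex.exp (Complex.I * ((zdot (ν μ) (gam n lam g) : ℝ) : ℂ))) 0)
          (Smtrans g).conj contDiff_const
        simpa using this
      have Smterm : ∀ g : Fin n → Fin lam,
          Sm (fun ω => conj (tauTW n lam N p ν (ω + gam n lam g)) *
            Complex.exp (Complex.I * ((zdot (ν μ) (gam n lam g) : ℝ) : ℂ))) :=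
        fun g => (Smtrans g).conj.mul contDiff_const
      have hOGsum : OG (fun ω => ∑ g ∈ Finset.univ.erase g₀,
          conj (tauTW n lam N p ν (ω + gam n lam g)) *
            Complex.exp (Complex.I * ((zdot (ν μ) (gam n lam g) : ℝ) : ℂ))) a 0 :=
        OG.sum hOGterm (fun g _ => Smterm g)
      have Smsum : Sm (fun ω => ∑ g ∈ Finset.univ.erase g₀,
          conj (tauTW n lam N p ν (ω + gam n lam g)) *
            Complex.exp (Complex.I * ((zdot (ν μ) (gam n lam g) : ℝ) : ℂ))) :=
        ContDiff.sum (fun g _ => Smterm g)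
      have hOGEsum : OG (fun ω => Complex.exp (Complex.I * ((zdot (ν μ) ω : ℝ) : ℂ)) *
          ∑ g ∈ Finset.univ.erase g₀, conj (tauTW n lam N p ν (ω + gam n lam g)) *
            Complex.exp (Complex.I * ((zdot (ν μ) (gam n lam g) : ℝ) : ℂ))) a 0 := by
        have := (OG.zero_le (fun ω : Fin n → ℝ =>
          Complex.exp (Complex.I * ((zdot (ν μ) ω : ℝ) : ℂ))) 0).mul hOGsum SmE Smsum
        simpa using this
      have SmEsum : Sm (fun ω => Complex.exp (Complex.I * ((zdot (ν μ) ω : ℝ) : ℂ)) *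
          ∑ g ∈ Finset.univ.erase g₀, conj (tauTW n lam N p ν (ω + gam n lam g)) *
            Complex.exp (Complex.I * ((zdot (ν μ) (gam n lam g) : ℝ) : ℂ))) := SmE.mul Smsum
      have hOGτEsum : OG (fun ω => tauTW n lam N p ν ω *
          (Complex.exp (Complex.I * ((zdot (ν μ) ω : ℝ) : ℂ)) *
            ∑ g ∈ Finset.univ.erase g₀, conj (tauTW n lam N p ν (ω + gam n lam g)) *
              Complex.exp (Complex.I * ((zdot (ν μ) (gam n lam g) : ℝ) : ℂ)))) a 0 := by
        have := (OG.zero_le (tauTW n lam N p ν) 0).mul hOGEsum Smτ SmEsum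
        simpa using this
      have SmτEsum : Sm (fun ω => tauTW n lam N p ν ω *
          (Complex.exp (Complex.I * ((zdot (ν μ) ω : ℝ) : ℂ)) *
            ∑ g ∈ Finset.univ.erase g₀, conj (tauTW n lam N p ν (ω + gam n lam g)) *
              Complex.exp (Complex.I * ((zdot (ν μ) (gam n lam g) : ℝ) : ℂ)))) := Smτ.mul SmEsum
      have hB : OG (fun ω =>
          (-((((lam : ℝ) ^ (-(n : ℝ) / 2) : ℝ) : ℂ) * (((lam : ℝ) ^ (-(n : ℝ) / 2) : ℝ) : ℂ))) *
            (tauTW n lam N p ν ω *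
              (Complex.exp (Complex.I * ((zdot (ν μ) ω : ℝ) : ℂ)) *
                ∑ g ∈ Finset.univ.erase g₀, conj (tauTW n lam N p ν (ω + gam n lam g)) *
                  Complex.exp (Complex.I * ((zdot (ν μ) (gam n lam g) : ℝ) : ℂ))))) a 0 :=
        hOGτEsum.smulC _ SmτEsum
      have SmA : Sm (fun ω => Complex.exp (Complex.I * ((zdot (ν μ) ω : ℝ) : ℂ)) *
          (-(((((lam : ℝ) ^ (-(n : ℝ) / 2) : ℝ) : ℂ) * tauTW n lam N p ν ω - 1)
            + conj ((((lam : ℝ) ^ (-(n : ℝ) / 2) : ℝ) : ℂ) * tauTW n lam N p ν ω - 1)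
            + ((((lam : ℝ) ^ (-(n : ℝ) / 2) : ℝ) : ℂ) * tauTW n lam N p ν ω - 1) *
              conj ((((lam : ℝ) ^ (-(n : ℝ) / 2) : ℝ) : ℂ) * tauTW n lam N p ν ω - 1)))) :=
        SmE.mul Smneg
      have SmB : Sm (fun ω =>
          (-((((lam : ℝ) ^ (-(n : ℝ) / 2) : ℝ) : ℂ) * (((lam : ℝ) ^ (-(n : ℝ) / 2) : ℝ) : ℂ))) *
            (tauTW n lam N p ν ω *
              (Complex.exp (Complex.I * ((zdot (ν μ) ω : ℝ) : ℂ)) *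
                ∑ g ∈ Finset.univ.erase g₀, conj (tauTW n lam N p ν (ω + gam n lam g)) *
                  Complex.exp (Complex.I * ((zdot (ν μ) (gam n lam g) : ℝ) : ℂ))))) :=
        contDiff_const.mul SmτEsum
      have final := (hA.mono (min_le_right a b)).add (hB.mono (min_le_left a b)) SmA SmB
      exact final.congrF hqCeq
    · -- complementary mask for μ ≥ N
      have hPPμ : PP N p μ = fun _ : Fin n → ℝ => (1:ℂ) := by rw [PP, if_neg hμN]
      have hqCeq : qC n lam N p ν μ = fun ω =>
          (((lam : ℝ) ^ (-(n : ℝ) / 2) : ℝ) : ℂ) *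
            ∑ g ∈ Finset.univ.erase g₀, tauTW n lam N p ν (ω + gam n lam g) *
              Complex.exp (-(Complex.I * ((zdot (ν μ) (gam n lam g) : ℝ) : ℂ))) := by
        funext ω
        have hS := hpp ω
        simp only [hPPμ, one_mul] at hS
        rw [← Finset.add_sum_erase _ _ (Finset.mem_univ g₀)] at hS
        have hg₀term : tauTW n lam N p ν (ω + gam n lam g₀) *
            Complex.exp (-(Complex.I * ((zdot (ν μ) (gam n lam g₀) : ℝ) : ℂ)))
            = tauTW n lam N p ν ω := by
          rw [hgam0, add_zero, zdot_zero]
          simp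
        rw [hg₀term] at hS
        simp only [qC, if_neg hμN]
        linear_combination (-((((lam : ℝ) ^ (-(n : ℝ) / 2) : ℝ) : ℂ))) * hS
          - Complex.exp (Complex.I * ((zdot (ν μ) ω : ℝ) : ℂ)) * hrr1
      have hOGterm : ∀ g ∈ Finset.univ.erase g₀,
          OG (fun ω => tauTW n lam N p ν (ω + gam n lam g) *
            Complex.exp (-(Complex.I * ((zdot (ν μ) (gam n lam g) : ℝ) : ℂ)))) a 0 := by
        intro g hg
        have hgne : g ≠ g₀ := (Finset.mem_erase.mp hg).1
        have := (hOGtrans g hgne).mul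
          (OG.zero_le (fun _ => Complex.exp (-(Complex.I *
            ((zdot (ν μ) (gam n lam g) : ℝ) : ℂ)))) 0) (Smtrans g) contDiff_const
        simpa using this
      have Smterm : ∀ g : Fin n → Fin lam,
          Sm (fun ω => tauTW n lam N p ν (ω + gam n lam g) *
            Complex.exp (-(Complex.I * ((zdot (ν μ) (gam n lam g) : ℝ) : ℂ)))) :=
        fun g => (Smtrans g).mul contDiff_const
      have hOGsum : OG (fun ω => ∑ g ∈ Finset.univ.erase g₀,
          tauTW n lam N p ν (ω + gam n lam g) *
            Complex.exp (-(Complex.I * ((zdot (ν μ) (gam n lam g) : ℝ) : ℂ)))) a 0 :=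
        OG.sum hOGterm (fun g _ => Smterm g)
      have Smsum : Sm (fun ω => ∑ g ∈ Finset.univ.erase g₀,
          tauTW n lam N p ν (ω + gam n lam g) *
            Complex.exp (-(Complex.I * ((zdot (ν μ) (gam n lam g) : ℝ) : ℂ)))) :=
        ContDiff.sum (fun g _ => Smterm g)
      have final := (hOGsum.smulC (((lam : ℝ) ^ (-(n : ℝ) / 2) : ℝ) : ℂ) Smsum).congrF hqCeq
      exact final.mono (min_le_left a b)
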